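/- arXiv:0709.2337 — 3 statements merged into one kernel-verified Lean document; each statement's English description precedes it below -/
import Mathlib

section
/- Let U ⊆ 𝔻 be an open set and f : U → 𝔻 a function, written f(x+tj) = f₁(x,t) + f₂(x,t)j, which is continuously differentiable on U (as a map of ℝ²). Then f is 𝔻-holomorphic on U — i.e., for every z₀ ∈ U the limit of (f(z) − f(z₀))·(z − z₀)⁻¹ as z → z₀ through points z with z − z₀ invertible exists in 𝔻 — if and only if ∂f₁/∂x = ∂f₂/∂t and ∂f₂/∂x = ∂f₁/∂t hold throughout U. Moreover, in that case the derivative equals f′ = ∂f₁/∂x + (∂f₂/∂x)j, and f′(z) is invertible in 𝔻 if and only if the Jacobian determinant of the map (x,t) ↦ (f₁(x,t), f₂(x,t)) at z is nonzero. -/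
noncomputable section

open Filter Topology MeasureTheory

/-- Hyperbolic (duplex) numbers 𝔻, modeled as pairs `(Re z, Im z)` with `j ^ 2 = 1`. -/
abbrev Hyp : Type := ℝ × ℝ

/-- Real part of a hyperbolic number. -/
def hre (a : Hyp) : ℝ := a.1

/-- Imaginary part of a hyperbolic number. -/
def him (a : Hyp) : ℝ := a.2

/-- The hyperbolic imaginary unit `j`. -/
def hj : Hyp := (0, 1)

/-- Hyperbolic multiplication: `(x+tj)(x'+t'j) = (xx'+tt') + (xt'+tx')j`. -/
def hmul (a b : Hyp) : Hyp := (a.1 * b.1 + a.2 * b.2, a.1 * b.2 + a.2 * b.1)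

/-- Hyperbolic conjugation: `conj (x+tj) = x - tj`. -/
def hconj (a : Hyp) : Hyp := (a.1, -a.2)

/-- Invertibility of a hyperbolic number: `x² ≠ t²`. -/
def IsInv (a : Hyp) : Prop := a.1 ^ 2 ≠ a.2 ^ 2

/-- Hyperbolic inverse `z⁻¹ = z̄ / |z|²` with `|z|² = x² - t²`. -/
def hinv (a : Hyp) : Hyp := (a.1 / (a.1 ^ 2 - a.2 ^ 2), -a.2 / (a.1 ^ 2 - a.2 ^ 2))

/-- Hyperbolic division. -/
def hdiv (a b : Hyp) : Hyp := hmul a (hinv b)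

/-- Partial derivative in the first (`x`) variable. -/
def pdx (g : Hyp → ℝ) (p : Hyp) : ℝ := deriv (fun s => g (s, p.2)) p.1

/-- Partial derivative in the second (`t`) variable. -/
def pdt (g : Hyp → ℝ) (p : Hyp) : ℝ := deriv (fun s => g (p.1, s)) p.2

/-- The wave operator `□g = g_xx - g_tt`. -/
def waveOp (g : Hyp → ℝ) (p : Hyp) : ℝ := pdx (pdx g) p - pdt (pdt g) p

/-- `w_z = ½(∂_x + j ∂_t) w = ½((u_x+v_t) + (v_x+u_t)j)` for a 𝔻-valued `w = u + jv`. -/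
def dz (w : Hyp → Hyp) (p : Hyp) : Hyp :=
  ((pdx (fun q => (w q).1) p + pdt (fun q => (w q).2) p) / 2,
   (pdx (fun q => (w q).2) p + pdt (fun q => (w q).1) p) / 2)

/-- `w_z̄ = ½(∂_x - j ∂_t) w = ½((u_x-v_t) + (v_x-u_t)j)` for a 𝔻-valued `w = u + jv`. -/
def dzbar (w : Hyp → Hyp) (p : Hyp) : Hyp :=
  ((pdx (fun q => (w q).1) p - pdt (fun q => (w q).2) p) / 2,
   (pdx (fun q => (w q).2) p - pdt (fun q => (w q).1) p) / 2)

/-- `f_z = ½(f_x + j f_t)` for a real-valued `f`. -/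
def rz (f : Hyp → ℝ) (p : Hyp) : Hyp := (pdx f p / 2, pdt f p / 2)

/-- `f_z̄ = ½(f_x - j f_t)` for a real-valued `f`. -/
def rzbar (f : Hyp → ℝ) (p : Hyp) : Hyp := (pdx f p / 2, -(pdt f p) / 2)

/-- 𝔻-differentiability at `z₀`: the difference quotient `(f z - f z₀)·(z - z₀)⁻¹`
tends to `d` as `z → z₀` through points with `z - z₀` invertible. -/
def HasHDerivAt (f : Hyp → Hyp) (d : Hyp) (z₀ : Hyp) : Prop :=
  Filter.Tendsto (fun z => hmul (f z - f z₀) (hinv (z - z₀)))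
    (nhdsWithin z₀ {z | IsInv (z - z₀)}) (nhds d)

/-- `F Ḡ - F̄ G`. -/
def pairDenom (F G : Hyp → Hyp) (z : Hyp) : Hyp :=
  hmul (F z) (hconj (G z)) - hmul (hconj (F z)) (G z)

/-- Characteristic coefficient `a_(F,G) = -(F̄ G_z̄ - F_z̄ Ḡ)/(F Ḡ - F̄ G)`. -/
def aFG (F G : Hyp → Hyp) (z : Hyp) : Hyp :=
  - hdiv (hmul (hconj (F z)) (dzbar G z) - hmul (dzbar F z) (hconj (G z))) (pairDenom F G z)

/-- Characteristic coefficient `b_(F,G) = (F G_z̄ - F_z̄ G)/(F Ḡ - F̄ G)`. -/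
def bFG (F G : Hyp → Hyp) (z : Hyp) : Hyp :=
  hdiv (hmul (F z) (dzbar G z) - hmul (dzbar F z) (G z)) (pairDenom F G z)

/-- Characteristic coefficient `A_(F,G) = -(F̄ G_z - F_z Ḡ)/(F Ḡ - F̄ G)`. -/
def AFG (F G : Hyp → Hyp) (z : Hyp) : Hyp :=
  - hdiv (hmul (hconj (F z)) (dz G z) - hmul (dz F z) (hconj (G z))) (pairDenom F G z)

/-- Characteristic coefficient `B_(F,G) = (F G_z - F_z G)/(F Ḡ - F̄ G)`. -/
def BFG (F G : Hyp → Hyp) (z : Hyp) : Hyp :=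
  hdiv (hmul (F z) (dz G z) - hmul (dz F z) (G z)) (pairDenom F G z)

/-- A generating pair on `Ω`: twice continuously differentiable `F, G` with `Im(F̄G) ≠ 0`. -/
def IsGenPair (F G : Hyp → Hyp) (Ω : Set Hyp) : Prop :=
  ContDiffOn ℝ 2 F Ω ∧ ContDiffOn ℝ 2 G Ω ∧ ∀ z ∈ Ω, him (hmul (hconj (F z)) (G z)) ≠ 0

/-- The idempotent `e₁ = (1+j)/2`. -/
def e1 : Hyp := (1/2, 1/2)

/-- The idempotent `e₂ = (1-j)/2`. -/
def e2 : Hyp := (1/2, -1/2)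

/-- Contour integral `∮_{∂R} h dz` over the counterclockwise boundary of the rectangle
`[x₁,x₂] × [t₁,t₂]`, with hyperbolic multiplication (`dz = dx` on horizontal sides,
`dz = j dt` on vertical sides). -/
def rectContourInt (h : Hyp → Hyp) (x₁ x₂ t₁ t₂ : ℝ) : Hyp :=
  ((∫ x in x₁..x₂, h (x, t₁)) - ∫ x in x₁..x₂, h (x, t₂)) +
    hmul hj ((∫ t in t₁..t₂, h (x₂, t)) - ∫ t in t₁..t₂, h (x₁, t))

/-- Integral `∫_{[z₀,z]} h dζ` along the straight segment from `z₀` to `z`,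
with hyperbolic multiplication. -/
def segInt (h : Hyp → Hyp) (z₀ z : Hyp) : Hyp :=
  ∫ s in (0:ℝ)..1, hmul (h (z₀ + s • (z - z₀))) (z - z₀)

/-- Natural powers in 𝔻. -/
def hpow (a : Hyp) : ℕ → Hyp
  | 0 => (1, 0)
  | n + 1 => hmul a (hpow a n)

/-- Integer powers in 𝔻 (for invertible base). -/
def hzpow (a : Hyp) : ℤ → Hyp
  | Int.ofNat n => hpow a n
  | Int.negSucc n => hinv (hpow a (n + 1))

/-! In the idempotent coordinates `x + t` and `x - t` hyperbolic multiplication and inversion act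
coordinatewise, so the difference quotient `(f z - f z₀)(z - z₀)⁻¹` splits into two real difference
quotients: that of `(f₁ + f₂)` with respect to `x + t` and that of `(f₁ - f₂)` with respect to
`x - t`. Real differentiability alone does not control it, since `(z - z₀)⁻¹` blows up near the
null lines `x ± t = const`. The Cauchy–Riemann equations say that the real derivative of `f` is
multiplication by an element of 𝔻; then `f₁ + f₂` has zero derivative along `x - t`, hence on a
ball is a function of `x + t` alone, and its difference quotient converges; likewise for
`f₁ - f₂`. Conversely, approaching `z₀` along the invertible directions `1` and `j` identifies the
𝔻-derivative both with `∂f/∂x` and with `j ∂f/∂t`. -/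

section Calculus

variable {E F : Type*} [NormedAddCommGroup E] [NormedSpace ℝ E]
  [NormedAddCommGroup F] [NormedSpace ℝ F]

theorem HasFDerivAt.tendsto_inv_smul_sub_line {g : E → F} {L : E →L[ℝ] F} {x : E}
    (hg : HasFDerivAt g L x) (v : E) :
    Tendsto (fun s : ℝ => s⁻¹ • (g (x + s • v) - g x)) (𝓝[≠] 0) (𝓝 (L v)) := by
  have hline : HasDerivAt (fun s : ℝ => x + s • v) v 0 := by
    simpa using ((hasDerivAt_id (0 : ℝ)).smul_const v).const_add x
  have hgx : HasFDerivAt g L (x + (0 : ℝ) • v) := by simpa using hg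
  simpa using (hgx.comp_hasDerivAt 0 hline).tendsto_slope_zero

theorem Convex.eq_of_hasFDerivAt_apply_sub_eq_zero {g : E → F} {g' : E → E →L[ℝ] F}
    {S : Set E} (hS : Convex ℝ S) (hg : ∀ w ∈ S, HasFDerivAt g (g' w) w) {x y : E}
    (hx : x ∈ S) (hy : y ∈ S) (hzero : ∀ w ∈ S, g' w (y - x) = 0) : g y = g x := by
  have hseg : ∀ t ∈ Set.Icc (0 : ℝ) 1, x + t • (y - x) ∈ S := fun t ht =>
    hS.add_smul_sub_mem hx hy ht
  have hderiv : ∀ t ∈ Set.Icc (0 : ℝ) 1,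
      HasDerivAt (fun t : ℝ => g (x + t • (y - x))) 0 t := by
    intro t ht
    have hline : HasDerivAt (fun t : ℝ => x + t • (y - x)) (y - x) t := by
      simpa using ((hasDerivAt_id t).smul_const (y - x)).const_add x
    have hcomp := (hg _ (hseg t ht)).comp_hasDerivAt t hline
    rwa [hzero _ (hseg t ht)] at hcomp
  have hconst := constant_of_has_deriv_right_zero
    (fun t ht => (hderiv t ht).continuousAt.continuousWithinAt)
    (fun t ht => (hderiv t (Set.Ico_subset_Icc_self ht)).hasDerivWithinAt) 1
    (Set.right_mem_Icc.2 zero_le_one)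
  simpa using hconst

theorem tendsto_inv_smul_sub_of_hasFDerivAt_ker_eq_zero {g : E → F} {g' : E → E →L[ℝ] F}
    {S : Set E} (hS : IsOpen S) (hg : ∀ w ∈ S, HasFDerivAt g (g' w) w) {ℓ : E →L[ℝ] ℝ}
    (hker : ∀ w ∈ S, ∀ y, ℓ y = 0 → g' w y = 0) {v : E} (hv : ℓ v = 1)
    {z₀ : E} (hz₀ : z₀ ∈ S) :
    Tendsto (fun z => (ℓ (z - z₀))⁻¹ • (g z - g z₀)) (𝓝[{z | ℓ (z - z₀) ≠ 0}] z₀)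
      (𝓝 (g' z₀ v)) := by
  obtain ⟨r, hr, hball⟩ := Metric.isOpen_iff.1 hS z₀ hz₀
  -- `g` is constant along the cosets of `ker ℓ`, so near `z₀` it factors through `ℓ`
  have hproj : Tendsto (fun z => z₀ + ℓ (z - z₀) • v) (𝓝 z₀) (𝓝 z₀) := by
    have hcont : Continuous (fun z => z₀ + ℓ (z - z₀) • v) := by fun_prop
    simpa using hcont.tendsto z₀
  have hfactor : ∀ᶠ z in 𝓝 z₀, g z = g (z₀ + ℓ (z - z₀) • v) := by
    filter_upwards [Metric.ball_mem_nhds z₀ hr, hproj (Metric.ball_mem_nhds z₀ hr)]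
      with z hz hpz
    refine (convex_ball z₀ r).eq_of_hasFDerivAt_apply_sub_eq_zero
      (fun w hw => hg w (hball hw)) hpz hz fun w hw => hker w (hball hw) _ ?_
    simp [hv]
  have hcoord : Tendsto (fun z => ℓ (z - z₀)) (𝓝[{z | ℓ (z - z₀) ≠ 0}] z₀) (𝓝[≠] 0) := by
    refine tendsto_nhdsWithin_iff.2 ⟨?_, eventually_nhdsWithin_of_forall fun z hz => hz⟩
    have hcont : Continuous (fun z => ℓ (z - z₀)) := by fun_prop
    simpa using (hcont.tendsto z₀).mono_left nhdsWithin_le_nhds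
  refine (((hg z₀ hz₀).tendsto_inv_smul_sub_line v).comp hcoord).congr' ?_
  filter_upwards [nhdsWithin_le_nhds hfactor] with z hz
  simp [hz]

end Calculus

-- coefficients in the idempotent decomposition `z = coordE1 z • e1 + coordE2 z • e2`
def coordE1 : Hyp →L[ℝ] ℝ := ContinuousLinearMap.fst ℝ ℝ ℝ + ContinuousLinearMap.snd ℝ ℝ ℝ

def coordE2 : Hyp →L[ℝ] ℝ := ContinuousLinearMap.fst ℝ ℝ ℝ - ContinuousLinearMap.snd ℝ ℝ ℝ

@[simp] theorem coordE1_apply (z : Hyp) : coordE1 z = z.1 + z.2 := rfl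

@[simp] theorem coordE2_apply (z : Hyp) : coordE2 z = z.1 - z.2 := rfl

theorem tendsto_nhds_iff_coordE {α : Type*} {l : Filter α} {u : α → Hyp} {d : Hyp} :
    Tendsto u l (𝓝 d) ↔
      Tendsto (fun x => coordE1 (u x)) l (𝓝 (coordE1 d)) ∧
        Tendsto (fun x => coordE2 (u x)) l (𝓝 (coordE2 d)) := by
  refine ⟨fun h => ⟨(coordE1.continuous.tendsto d).comp h,
    (coordE2.continuous.tendsto d).comp h⟩, fun ⟨h1, h2⟩ => ?_⟩
  have h := ((h1.add h2).div_const 2).prodMk_nhds ((h1.sub h2).div_const 2)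
  convert h using 2 <;> simp only [coordE1_apply, coordE2_apply] <;> ring_nf

structure IsHypChar (χ : Hyp →L[ℝ] ℝ) : Prop where
  map_hmul : ∀ a b, χ (hmul a b) = χ a * χ b
  map_one : χ (1, 0) = 1

theorem isHypChar_coordE1 : IsHypChar coordE1 :=
  ⟨fun a b => by simp only [coordE1_apply, hmul]; ring, by simp⟩

theorem isHypChar_coordE2 : IsHypChar coordE2 :=
  ⟨fun a b => by simp only [coordE2_apply, hmul]; ring, by simp⟩

theorem hmul_hinv_self {a : Hyp} (ha : IsInv a) : hmul a (hinv a) = (1, 0) := by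
  have hD : a.1 ^ 2 - a.2 ^ 2 ≠ 0 := sub_ne_zero.2 ha
  ext <;> simp only [hmul, hinv] <;> field_simp <;> ring

namespace IsHypChar

variable {χ : Hyp →L[ℝ] ℝ}

theorem map_mul_map_hinv (hχ : IsHypChar χ) {a : Hyp} (ha : IsInv a) :
    χ a * χ (hinv a) = 1 := by
  rw [← hχ.map_hmul, hmul_hinv_self ha, hχ.map_one]

theorem map_hinv (hχ : IsHypChar χ) {a : Hyp} (ha : IsInv a) : χ (hinv a) = (χ a)⁻¹ :=
  eq_inv_of_mul_eq_one_right (hχ.map_mul_map_hinv ha)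

theorem map_ne_zero (hχ : IsHypChar χ) {a : Hyp} (ha : IsInv a) : χ a ≠ 0 :=
  left_ne_zero_of_mul_eq_one (hχ.map_mul_map_hinv ha)

theorem tendsto_map_diffQuot (hχ : IsHypChar χ) {U : Set Hyp}
    (hU : IsOpen U) {f D : Hyp → Hyp} {f' : Hyp → Hyp →L[ℝ] Hyp}
    (hf : ∀ p ∈ U, HasFDerivAt f (f' p) p) (hD : ∀ p ∈ U, ∀ w, f' p w = hmul (D p) w)
    {z₀ : Hyp} (hz₀ : z₀ ∈ U) :
    Tendsto (fun z => χ (hmul (f z - f z₀) (hinv (z - z₀))))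
      (𝓝[{z | IsInv (z - z₀)}] z₀) (𝓝 (χ (D z₀))) := by
  have hg : ∀ w ∈ U, HasFDerivAt (fun z => χ (f z)) (χ.comp (f' w)) w := fun w hw =>
    χ.hasFDerivAt.comp w (hf w hw)
  have hker : ∀ w ∈ U, ∀ y, χ y = 0 → χ.comp (f' w) y = 0 := by
    intro w hw y hy
    simp [hD w hw, hχ.map_hmul, hy]
  have key := tendsto_inv_smul_sub_of_hasFDerivAt_ker_eq_zero hU hg hker hχ.map_one hz₀
  simp only [ContinuousLinearMap.comp_apply, hD z₀ hz₀, hχ.map_hmul, hχ.map_one,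
    mul_one] at key
  refine (key.mono_left (nhdsWithin_mono _ fun z hz => hχ.map_ne_zero hz)).congr' ?_
  filter_upwards [self_mem_nhdsWithin] with z hz
  rw [hχ.map_hmul, hχ.map_hinv hz, map_sub, map_sub, smul_eq_mul, mul_comm]

end IsHypChar

theorem hasHDerivAt_of_hasFDerivAt_eq_hmul {U : Set Hyp} (hU : IsOpen U) {f D : Hyp → Hyp}
    {f' : Hyp → Hyp →L[ℝ] Hyp} (hf : ∀ p ∈ U, HasFDerivAt f (f' p) p)
    (hD : ∀ p ∈ U, ∀ w, f' p w = hmul (D p) w) {z₀ : Hyp} (hz₀ : z₀ ∈ U) :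
    HasHDerivAt f (D z₀) z₀ :=
  tendsto_nhds_iff_coordE.2 ⟨isHypChar_coordE1.tendsto_map_diffQuot hU hf hD hz₀,
    isHypChar_coordE2.tendsto_map_diffQuot hU hf hD hz₀⟩

theorem IsInv.smul {w : Hyp} (hw : IsInv w) {s : ℝ} (hs : s ≠ 0) : IsInv (s • w) := by
  simpa [IsInv, mul_pow, hs] using hw

theorem hmul_hinv_smul (a w : Hyp) (s : ℝ) :
    hmul a (hinv (s • w)) = hmul (s⁻¹ • a) (hinv w) := by
  rcases eq_or_ne s 0 with rfl | hs
  · simp [hmul, hinv]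
  · ext <;> simp only [hmul, hinv, Prod.smul_fst, Prod.smul_snd, smul_eq_mul] <;>
      field_simp

theorem HasHDerivAt.eq_hmul_hinv {f : Hyp → Hyp} {d z₀ : Hyp} {L : Hyp →L[ℝ] Hyp}
    (hd : HasHDerivAt f d z₀) (hL : HasFDerivAt f L z₀) {w : Hyp} (hw : IsInv w) :
    d = hmul (L w) (hinv w) := by
  have hline : Tendsto (fun s : ℝ => z₀ + s • w) (𝓝[≠] 0) (𝓝[{z | IsInv (z - z₀)}] z₀) := by
    refine tendsto_nhdsWithin_iff.2 ⟨?_, eventually_nhdsWithin_of_forall fun s hs => ?_⟩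
    · have hcont : Continuous (fun s : ℝ => z₀ + s • w) := by fun_prop
      simpa using (hcont.tendsto 0).mono_left nhdsWithin_le_nhds
    · simpa using hw.smul hs
  have hcont : Continuous (fun u : Hyp => hmul u (hinv w)) := by unfold hmul; fun_prop
  refine tendsto_nhds_unique ((hd.comp hline).congr fun s => ?_)
    ((hcont.tendsto _).comp (hL.tendsto_inv_smul_sub_line w))
  simp [hmul_hinv_smul]

theorem HasFDerivAt.pdx_eq {g : Hyp → ℝ} {L : Hyp →L[ℝ] ℝ} {p : Hyp}
    (hg : HasFDerivAt g L p) :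
    pdx g p = L (1, 0) := by
  have hline : HasDerivAt (fun s : ℝ => ((s, p.2) : Hyp)) (1, 0) p.1 :=
    (hasDerivAt_id p.1).prodMk (hasDerivAt_const _ _)
  exact (hg.comp_hasDerivAt p.1 hline).deriv

theorem HasFDerivAt.pdt_eq {g : Hyp → ℝ} {L : Hyp →L[ℝ] ℝ} {p : Hyp}
    (hg : HasFDerivAt g L p) :
    pdt g p = L (0, 1) := by
  have hline : HasDerivAt (fun s : ℝ => ((p.1, s) : Hyp)) (0, 1) p.2 :=
    (hasDerivAt_const _ _).prodMk (hasDerivAt_id p.2)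
  exact (hg.comp_hasDerivAt p.2 hline).deriv

theorem forall_apply_eq_hmul_iff (L : Hyp →L[ℝ] Hyp) :
    (∀ w, L w = hmul (L (1, 0)) w) ↔
      (L (1, 0)).1 = (L (0, 1)).2 ∧ (L (1, 0)).2 = (L (0, 1)).1 := by
  constructor
  · intro h
    have h01 := h (0, 1)
    simp only [hmul, mul_zero, mul_one, zero_add] at h01
    simp [h01]
  · rintro ⟨h1, h2⟩ w
    have hw : w = w.1 • ((1, 0) : Hyp) + w.2 • ((0, 1) : Hyp) := by ext <;> simp
    rw [hw, map_add, map_smul, map_smul]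
    ext <;> simp [hmul, h1, h2] <;> ring

theorem HasFDerivAt.cr_iff {f : Hyp → Hyp} {L : Hyp →L[ℝ] Hyp} {p : Hyp}
    (hL : HasFDerivAt f L p) :
    (pdx (fun q => (f q).1) p = pdt (fun q => (f q).2) p ∧
        pdx (fun q => (f q).2) p = pdt (fun q => (f q).1) p) ↔
      ∀ w, L w = hmul (L (1, 0)) w := by
  rw [forall_apply_eq_hmul_iff, hL.fst.pdx_eq, hL.snd.pdx_eq, hL.fst.pdt_eq, hL.snd.pdt_eq]
  rfl

theorem HasHDerivAt.forall_apply_eq_hmul {f : Hyp → Hyp} {d z₀ : Hyp} {L : Hyp →L[ℝ] Hyp}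
    (hd : HasHDerivAt f d z₀) (hL : HasFDerivAt f L z₀) : ∀ w, L w = hmul (L (1, 0)) w := by
  have h10 := hd.eq_hmul_hinv hL (w := (1, 0)) (by norm_num [IsInv])
  have h01 := hd.eq_hmul_hinv hL (w := (0, 1)) (by norm_num [IsInv])
  norm_num [hmul, hinv] at h10 h01
  rw [forall_apply_eq_hmul_iff, ← h10, h01]
  simp

/-- a C¹ function on an open set `U ⊆ 𝔻` is 𝔻-holomorphic on `U` iff the
hyperbolic Cauchy–Riemann equations `∂f₁/∂x = ∂f₂/∂t` and `∂f₂/∂x = ∂f₁/∂t` hold on `U`;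
in that case the derivative is `f' = ∂f₁/∂x + (∂f₂/∂x)j`, and `f'(z)` is invertible iff the
Jacobian determinant of `(x,t) ↦ (f₁(x,t), f₂(x,t))` at `z` is nonzero. -/
theorem dHolomorphic_iff_CR (U : Set Hyp) (hU : IsOpen U) (f : Hyp → Hyp)
    (hf : ContDiffOn ℝ 1 f U) :
    ((∀ z₀ ∈ U, ∃ d : Hyp, HasHDerivAt f d z₀) ↔
      ∀ p ∈ U, pdx (fun q => (f q).1) p = pdt (fun q => (f q).2) p ∧
        pdx (fun q => (f q).2) p = pdt (fun q => (f q).1) p) ∧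
    ((∀ p ∈ U, pdx (fun q => (f q).1) p = pdt (fun q => (f q).2) p ∧
        pdx (fun q => (f q).2) p = pdt (fun q => (f q).1) p) →
      ∀ z ∈ U,
        HasHDerivAt f (pdx (fun q => (f q).1) z, pdx (fun q => (f q).2) z) z ∧
        (IsInv (pdx (fun q => (f q).1) z, pdx (fun q => (f q).2) z) ↔
          pdx (fun q => (f q).1) z * pdt (fun q => (f q).2) z -
            pdt (fun q => (f q).1) z * pdx (fun q => (f q).2) z ≠ 0)) := by
  have hL : ∀ p ∈ U, HasFDerivAt f (fderiv ℝ f p) p := fun p hp =>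
    ((hf.differentiableOn one_ne_zero).differentiableAt (hU.mem_nhds hp)).hasFDerivAt
  have hderiv : (∀ p ∈ U, pdx (fun q => (f q).1) p = pdt (fun q => (f q).2) p ∧
      pdx (fun q => (f q).2) p = pdt (fun q => (f q).1) p) →
      ∀ z ∈ U, HasHDerivAt f (pdx (fun q => (f q).1) z, pdx (fun q => (f q).2) z) z := by
    intro hCR z hz
    have hd := hasHDerivAt_of_hasFDerivAt_eq_hmul hU hL
      (fun p hp => (hL p hp).cr_iff.1 (hCR p hp)) hz
    rwa [(hL z hz).fst.pdx_eq, (hL z hz).snd.pdx_eq]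
  refine ⟨⟨fun hholo p hp => ?_, fun hCR z hz => ⟨_, hderiv hCR z hz⟩⟩,
    fun hCR z hz => ⟨hderiv hCR z hz, ?_⟩⟩
  · obtain ⟨d, hd⟩ := hholo p hp
    exact (hL p hp).cr_iff.2 (hd.forall_apply_eq_hmul (hL p hp))
  · obtain ⟨h1, h2⟩ := hCR z hz
    simp only [IsInv, ← h1, ← h2, sq, ne_eq, sub_eq_zero]
end
end

section
/- Let e₁ = (1+j)/2 and e₂ = (1−j)/2 in 𝔻. Let X₁ and X₂ be open subsets of ℝ and let X = {x + tj ∈ 𝔻 : x + t ∈ X₁ and x − t ∈ X₂}. If g₁ : X₁ → ℝ and g₂ : X₂ → ℝ are differentiable on X₁ and X₂ respectively, then the function f : X → 𝔻 defined by f(x+tj) = g₁(x+t)e₁ + g₂(x−t)e₂ is 𝔻-holomorphic on X (at every z₀ ∈ X the limit of (f(z) − f(z₀))·(z − z₀)⁻¹ as z → z₀ through points z with z − z₀ invertible exists), and its derivative is f′(x+tj) = g₁′(x+t)e₁ + g₂′(x−t)e₂. -/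
noncomputable section

open Filter Topology MeasureTheory

/-- if `g₁, g₂` are differentiable on open sets `X₁, X₂ ⊆ ℝ`, then
`f(x+tj) = g₁(x+t)e₁ + g₂(x−t)e₂` is 𝔻-holomorphic on
`X = {x+tj : x+t ∈ X₁, x−t ∈ X₂}` with derivative `f'(x+tj) = g₁'(x+t)e₁ + g₂'(x−t)e₂`. -/
theorem dHolomorphic_of_idempotent_rep (X₁ X₂ : Set ℝ) (hX₁ : IsOpen X₁) (hX₂ : IsOpen X₂)
    (g₁ g₂ g₁' g₂' : ℝ → ℝ)
    (hg₁ : ∀ x ∈ X₁, HasDerivAt g₁ (g₁' x) x)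
    (hg₂ : ∀ x ∈ X₂, HasDerivAt g₂ (g₂' x) x)
    (X : Set Hyp) (hX : X = {z : Hyp | z.1 + z.2 ∈ X₁ ∧ z.1 - z.2 ∈ X₂})
    (f : Hyp → Hyp)
    (hf : ∀ z : Hyp, f z = g₁ (z.1 + z.2) • e1 + g₂ (z.1 - z.2) • e2) :
    ∀ z₀ ∈ X, HasHDerivAt f (g₁' (z₀.1 + z₀.2) • e1 + g₂' (z₀.1 - z₀.2) • e2) z₀ := by
  intro z₀ hz₀
  subst hX
  obtain ⟨h1, h2⟩ := hz₀
  have hd1 := hg₁ _ h1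
  have hd2 := hg₂ _ h2
  rw [hasDerivAt_iff_tendsto_slope] at hd1 hd2
  set p₀ := z₀.1 + z₀.2 with hp₀
  set q₀ := z₀.1 - z₀.2 with hq₀
  set S : Set Hyp := {z | IsInv (z - z₀)} with hS
  have hcont1 : Filter.Tendsto (fun z : Hyp => z.1 + z.2) (nhdsWithin z₀ S) (nhds p₀) :=
    ((continuous_fst.add continuous_snd).tendsto z₀).mono_left nhdsWithin_le_nhds
  have hcont2 : Filter.Tendsto (fun z : Hyp => z.1 - z.2) (nhdsWithin z₀ S) (nhds q₀) :=
    ((continuous_fst.sub continuous_snd).tendsto z₀).mono_left nhdsWithin_le_nhds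
  have hne : ∀ z ∈ S, (z.1 + z.2 ≠ p₀) ∧ (z.1 - z.2 ≠ q₀) := by
    intro z hz
    have hz' : (z.1 - z₀.1) ^ 2 ≠ (z.2 - z₀.2) ^ 2 := hz
    constructor
    · intro h
      apply hz'
      have : z.1 - z₀.1 = -(z.2 - z₀.2) := by
        have := h
        simp only [hp₀] at this
        linarith
      rw [this]; ring
    · intro h
      apply hz'
      have : z.1 - z₀.1 = z.2 - z₀.2 := by
        have := h
        simp only [hq₀] at this
        linarith
      rw [this]
  have hmap1 : Filter.Tendsto (fun z : Hyp => z.1 + z.2) (nhdsWithin z₀ S) (nhdsWithin p₀ {p₀}ᶜ) := by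
    apply tendsto_nhdsWithin_of_tendsto_nhds_of_eventually_within _ hcont1
    filter_upwards [eventually_mem_nhdsWithin] with z hz using (hne z hz).1
  have hmap2 : Filter.Tendsto (fun z : Hyp => z.1 - z.2) (nhdsWithin z₀ S) (nhdsWithin q₀ {q₀}ᶜ) := by
    apply tendsto_nhdsWithin_of_tendsto_nhds_of_eventually_within _ hcont2
    filter_upwards [eventually_mem_nhdsWithin] with z hz using (hne z hz).2
  have T1 := hd1.comp hmap1
  have T2 := hd2.comp hmap2
  have Tlim : Filter.Tendsto
      (fun z : Hyp => (((slope g₁ p₀ (z.1 + z.2)) + (slope g₂ q₀ (z.1 - z.2))) / 2,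
        ((slope g₁ p₀ (z.1 + z.2)) - (slope g₂ q₀ (z.1 - z.2))) / 2))
      (nhdsWithin z₀ S)
      (nhds ((g₁' p₀ + g₂' q₀) / 2, (g₁' p₀ - g₂' q₀) / 2)) := by
    rw [nhds_prod_eq]
    exact ((T1.add T2).div_const 2).prodMk ((T1.sub T2).div_const 2)
  have htarget : (g₁' p₀ • e1 + g₂' q₀ • e2 : Hyp)
      = ((g₁' p₀ + g₂' q₀) / 2, (g₁' p₀ - g₂' q₀) / 2) := by
    simp [e1, e2, Prod.ext_iff]
    constructor <;> ring
  rw [HasHDerivAt, htarget]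
  apply Tlim.congr'
  filter_upwards [eventually_mem_nhdsWithin] with z hz
  obtain ⟨hu, hv⟩ := hne z hz
  have hu' : z.1 + z.2 - p₀ ≠ 0 := sub_ne_zero.mpr hu
  have hv' : z.1 - z.2 - q₀ ≠ 0 := sub_ne_zero.mpr hv
  have hw : (z.1 - z₀.1) ^ 2 - (z.2 - z₀.2) ^ 2 ≠ 0 := sub_ne_zero.mpr hz
  simp only [hf, hmul, hinv, e1, e2, slope_def_field, Prod.ext_iff, Prod.fst_add, Prod.snd_add,
    Prod.fst_sub, Prod.snd_sub, Prod.smul_fst, Prod.smul_snd, smul_eq_mul, div_eq_div_iff]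
  constructor <;> (field_simp; ring)
end
end

section
/- Let Ω ⊆ ℝ² be open, ν : Ω → ℝ, and let f : Ω → ℝ be a positive twice continuously differentiable function satisfying f_xx − f_tt = νf on Ω. Then for every twice continuously differentiable real-valued function φ on Ω the following two operator identities hold pointwise (as equalities in 𝔻, with real numbers embedded in 𝔻): (¼)(φ_xx − φ_tt − νφ) = ∂_z̄(∂_zφ − (f_z/f)φ) + (f_z/f)·conj(∂_zφ − (f_z/f)φ), and (¼)(φ_xx − φ_tt − νφ) = ∂_z(∂_z̄φ − (f_z̄/f)φ) + (f_z̄/f)·conj(∂_z̄φ − (f_z̄/f)φ); i.e. (□ − ν)φ = 4(∂_z̄ + (f_z/f)C)(∂_z − (f_z/f)C)φ = 4(∂_z + (f_z̄/f)C)(∂_z̄ − (f_z̄/f)C)φ, where C denotes hyperbolic conjugation. -/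
noncomputable section

open Filter Topology MeasureTheory

/-!
Write `L = f_z / f` and `w = ∂_z φ - L φ`. The product and quotient rules together with the
symmetry of mixed partials show that `∂_z̄ w + L w̄` is the real number `¼(□φ - (□f / f) φ)`,
which is `¼(□φ - νφ)` when `□f = νf`. The second factorization is the hyperbolic conjugate of the
first, since `f_z̄ = conj f_z`, `∂_z ∘ conj = conj ∘ ∂_z̄`, and the left-hand side is real.
-/

section HypAlgebra

@[simp] lemma hmul_ofReal (a : Hyp) (r : ℝ) : hmul a (r, 0) = (a.1 * r, a.2 * r) := by
  simp [hmul]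

@[simp] lemma hdiv_ofReal (a : Hyp) (r : ℝ) : hdiv a (r, 0) = (a.1 / r, a.2 / r) := by
  have hr : r / r ^ 2 = r⁻¹ := by
    rcases eq_or_ne r 0 with rfl | hr
    · simp
    · field_simp
  simp [hdiv, hinv, hmul, hr, div_eq_mul_inv]

@[simp] lemma hconj_hconj (a : Hyp) : hconj (hconj a) = a := by simp [hconj]

@[simp] lemma hconj_ofReal (r : ℝ) : hconj (r, 0) = (r, 0) := by simp [hconj]

lemma hconj_add (a b : Hyp) : hconj (a + b) = hconj a + hconj b := by
  simp [hconj, add_comm]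

lemma hconj_sub (a b : Hyp) : hconj (a - b) = hconj a - hconj b := by
  simp [hconj, sub_eq_add_neg, add_comm]

lemma hconj_hmul (a b : Hyp) : hconj (hmul a b) = hmul (hconj a) (hconj b) := by
  simp [hconj, hmul]
  ring

lemma hconj_hdiv_ofReal (a : Hyp) (r : ℝ) :
    hconj (hdiv a (r, 0)) = hdiv (hconj a) (r, 0) := by
  simp [hconj, neg_div]

end HypAlgebra

section PartialDerivatives

variable {g h : Hyp → ℝ} {p : Hyp}

lemma DifferentiableAt.along_x (hg : DifferentiableAt ℝ g p) :
    DifferentiableAt ℝ (fun s => g (s, p.2)) p.1 :=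
  hg.comp p.1 (differentiableAt_id.prodMk (differentiableAt_const _))

lemma DifferentiableAt.along_t (hg : DifferentiableAt ℝ g p) :
    DifferentiableAt ℝ (fun s => g (p.1, s)) p.2 :=
  hg.comp p.2 ((differentiableAt_const _).prodMk differentiableAt_id)

lemma pdx_sub (hg : DifferentiableAt ℝ g p) (hh : DifferentiableAt ℝ h p) :
    pdx (fun q => g q - h q) p = pdx g p - pdx h p :=
  deriv_sub hg.along_x hh.along_x

lemma pdt_sub (hg : DifferentiableAt ℝ g p) (hh : DifferentiableAt ℝ h p) :
    pdt (fun q => g q - h q) p = pdt g p - pdt h p :=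
  deriv_sub hg.along_t hh.along_t

lemma pdx_mul (hg : DifferentiableAt ℝ g p) (hh : DifferentiableAt ℝ h p) :
    pdx (fun q => g q * h q) p = pdx g p * h p + g p * pdx h p :=
  deriv_mul hg.along_x hh.along_x

lemma pdt_mul (hg : DifferentiableAt ℝ g p) (hh : DifferentiableAt ℝ h p) :
    pdt (fun q => g q * h q) p = pdt g p * h p + g p * pdt h p :=
  deriv_mul hg.along_t hh.along_t

lemma pdx_div (hg : DifferentiableAt ℝ g p) (hh : DifferentiableAt ℝ h p) (hp : h p ≠ 0) :
    pdx (fun q => g q / h q) p = (pdx g p * h p - g p * pdx h p) / h p ^ 2 :=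
  deriv_div hg.along_x hh.along_x hp

lemma pdt_div (hg : DifferentiableAt ℝ g p) (hh : DifferentiableAt ℝ h p) (hp : h p ≠ 0) :
    pdt (fun q => g q / h q) p = (pdt g p * h p - g p * pdt h p) / h p ^ 2 :=
  deriv_div hg.along_t hh.along_t hp

lemma pdx_div_const (c : ℝ) : pdx (fun q => g q / c) p = pdx g p / c :=
  deriv_div_const c

lemma pdt_div_const (c : ℝ) : pdt (fun q => g q / c) p = pdt g p / c :=
  deriv_div_const c

lemma pdx_neg : pdx (fun q => -g q) p = -pdx g p :=
  deriv.fun_neg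

lemma pdt_neg : pdt (fun q => -g q) p = -pdt g p :=
  deriv.fun_neg

lemma pdx_eq_fderiv (hg : DifferentiableAt ℝ g p) : pdx g p = fderiv ℝ g p (1, 0) :=
  (hg.hasFDerivAt.comp_hasDerivAt p.1 ((hasDerivAt_id _).prodMk (hasDerivAt_const _ p.2))).deriv

lemma pdt_eq_fderiv (hg : DifferentiableAt ℝ g p) : pdt g p = fderiv ℝ g p (0, 1) :=
  (hg.hasFDerivAt.comp_hasDerivAt p.2 ((hasDerivAt_const _ p.1).prodMk (hasDerivAt_id _))).deriv

lemma pdx_eventuallyEq_fderiv {n : ℕ} (hg : ContDiffAt ℝ (n + 1) g p) :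
    pdx g =ᶠ[𝓝 p] fun q => fderiv ℝ g q (1, 0) :=
  (hg.eventually (by simp)).mono fun _ hq => pdx_eq_fderiv (hq.differentiableAt (by simp))

lemma pdt_eventuallyEq_fderiv {n : ℕ} (hg : ContDiffAt ℝ (n + 1) g p) :
    pdt g =ᶠ[𝓝 p] fun q => fderiv ℝ g q (0, 1) :=
  (hg.eventually (by simp)).mono fun _ hq => pdt_eq_fderiv (hq.differentiableAt (by simp))

lemma ContDiffAt.pdx {n : ℕ} (hg : ContDiffAt ℝ (n + 1) g p) : ContDiffAt ℝ n (pdx g) p :=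
  ((hg.fderiv_right le_rfl).clm_apply contDiffAt_const).congr_of_eventuallyEq
    (pdx_eventuallyEq_fderiv hg)

lemma ContDiffAt.pdt {n : ℕ} (hg : ContDiffAt ℝ (n + 1) g p) : ContDiffAt ℝ n (pdt g) p :=
  ((hg.fderiv_right le_rfl).clm_apply contDiffAt_const).congr_of_eventuallyEq
    (pdt_eventuallyEq_fderiv hg)

lemma fderiv_fderiv_apply (hg : DifferentiableAt ℝ (fderiv ℝ g) p) (v w : Hyp) :
    fderiv ℝ (fun q => fderiv ℝ g q v) p w = fderiv ℝ (fderiv ℝ g) p w v := by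
  simp [fderiv_clm_apply hg (differentiableAt_const v)]

lemma pdx_pdt_comm (hg : ContDiffAt ℝ 2 g p) : pdx (pdt g) p = pdt (pdx g) p := by
  have hg' : DifferentiableAt ℝ (fderiv ℝ g) p :=
    (hg.fderiv_right (m := 1) le_rfl).differentiableAt one_ne_zero
  rw [pdx_eq_fderiv ((hg.pdt (n := 1)).differentiableAt one_ne_zero),
    pdt_eq_fderiv ((hg.pdx (n := 1)).differentiableAt one_ne_zero),
    (pdt_eventuallyEq_fderiv (n := 1) hg).fderiv_eq,
    (pdx_eventuallyEq_fderiv (n := 1) hg).fderiv_eq,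
    fderiv_fderiv_apply hg', fderiv_fderiv_apply hg']
  exact hg.isSymmSndFDerivAt (by simp) _ _

lemma rzbar_eq_hconj_rz : rzbar g p = hconj (rz g p) := by
  simp [rzbar, rz, hconj, neg_div]

lemma dz_hconj (w : Hyp → Hyp) : dz (fun q => hconj (w q)) p = hconj (dzbar w p) := by
  simp only [dz, dzbar, hconj, pdx_neg, pdt_neg]
  ext <;> ring

end PartialDerivatives

section KleinGordon

variable (f φ : Hyp → ℝ) (p : Hyp)

lemma dz_factor_rzbar_eq_hconj :
    dz (fun q => rzbar φ q - hmul (hdiv (rzbar f q) (f q, 0)) (φ q, 0)) p +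
        hmul (hdiv (rzbar f p) (f p, 0))
          (hconj (rzbar φ p - hmul (hdiv (rzbar f p) (f p, 0)) (φ p, 0))) =
      hconj (dzbar (fun q => rz φ q - hmul (hdiv (rz f q) (f q, 0)) (φ q, 0)) p +
        hmul (hdiv (rz f p) (f p, 0))
          (hconj (rz φ p - hmul (hdiv (rz f p) (f p, 0)) (φ p, 0)))) := by
  have hw : ∀ q, rzbar φ q - hmul (hdiv (rzbar f q) (f q, 0)) (φ q, 0) =
      hconj (rz φ q - hmul (hdiv (rz f q) (f q, 0)) (φ q, 0)) := fun q => by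
    rw [hconj_sub, hconj_hmul, hconj_hdiv_ofReal, hconj_ofReal, rzbar_eq_hconj_rz,
      rzbar_eq_hconj_rz]
  simp only [hw, dz_hconj]
  simp only [rzbar_eq_hconj_rz, hconj_add, hconj_hmul, hconj_hdiv_ofReal, hconj_hconj]

variable {f φ p}

lemma kleinGordon_factorization_at (hf : ContDiffAt ℝ 2 f p) (hφ : ContDiffAt ℝ 2 φ p)
    (hf0 : f p ≠ 0) :
    (((waveOp φ p - waveOp f p / f p * φ p) / 4, 0) : Hyp) =
      dzbar (fun q => rz φ q - hmul (hdiv (rz f q) (f q, 0)) (φ q, 0)) p +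
        hmul (hdiv (rz f p) (f p, 0))
          (hconj (rz φ p - hmul (hdiv (rz f p) (f p, 0)) (φ p, 0))) := by
  have hfd : DifferentiableAt ℝ f p := hf.differentiableAt two_ne_zero
  have hφd : DifferentiableAt ℝ φ p := hφ.differentiableAt two_ne_zero
  have hfx : DifferentiableAt ℝ (pdx f) p := (hf.pdx (n := 1)).differentiableAt one_ne_zero
  have hft : DifferentiableAt ℝ (pdt f) p := (hf.pdt (n := 1)).differentiableAt one_ne_zero
  have hφx : DifferentiableAt ℝ (pdx φ) p := (hφ.pdx (n := 1)).differentiableAt one_ne_zero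
  have hφt : DifferentiableAt ℝ (pdt φ) p := (hφ.pdt (n := 1)).differentiableAt one_ne_zero
  simp only [dzbar, rz, hmul_ofReal, hdiv_ofReal, Prod.mk_sub_mk]
  simp (disch := first | assumption | fun_prop (disch := assumption)) only
    [pdx_sub, pdt_sub, pdx_mul, pdt_mul, pdx_div, pdt_div, pdx_div_const, pdt_div_const]
  simp only [waveOp, hmul, hconj, pdx_pdt_comm hφ, pdx_pdt_comm hf, Prod.mk_add_mk]
  ext <;> field_simp <;> ring

end KleinGordon

/-- factorization of the Klein-Gordon operator. If `f > 0` is a C² solution of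
`□f = νf` on an open `Ω`, then for every real-valued `φ ∈ C²(Ω)`,
`¼(□φ − νφ) = (∂_z̄ + (f_z/f)C)(∂_z − (f_z/f)C)φ = (∂_z + (f_z̄/f)C)(∂_z̄ − (f_z̄/f)C)φ`. -/
theorem kleinGordon_factorization (Ω : Set Hyp) (hΩ : IsOpen Ω) (ν f : Hyp → ℝ)
    (hf : ContDiffOn ℝ 2 f Ω) (hfpos : ∀ p ∈ Ω, 0 < f p)
    (hKG : ∀ p ∈ Ω, waveOp f p = ν p * f p)
    (φ : Hyp → ℝ) (hφ : ContDiffOn ℝ 2 φ Ω) :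
    ∀ p ∈ Ω,
      ((((waveOp φ p - ν p * φ p) / 4, 0) : Hyp) =
        dzbar (fun q => rz φ q - hmul (hdiv (rz f q) (f q, 0)) ((φ q, 0) : Hyp)) p +
          hmul (hdiv (rz f p) (f p, 0))
            (hconj (rz φ p - hmul (hdiv (rz f p) (f p, 0)) ((φ p, 0) : Hyp)))) ∧
      ((((waveOp φ p - ν p * φ p) / 4, 0) : Hyp) =
        dz (fun q => rzbar φ q - hmul (hdiv (rzbar f q) (f q, 0)) ((φ q, 0) : Hyp)) p +
          hmul (hdiv (rzbar f p) (f p, 0))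
            (hconj (rzbar φ p - hmul (hdiv (rzbar f p) (f p, 0)) ((φ p, 0) : Hyp)))) := by
  intro p hp
  have hf0 : f p ≠ 0 := (hfpos p hp).ne'
  have hfirst := kleinGordon_factorization_at (hf.contDiffAt (hΩ.mem_nhds hp))
    (hφ.contDiffAt (hΩ.mem_nhds hp)) hf0
  rw [hKG p hp, mul_div_cancel_right₀ _ hf0] at hfirst
  refine ⟨hfirst, ?_⟩
  rw [dz_factor_rzbar_eq_hconj, ← hfirst, hconj_ofReal]
end
end
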